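/- arXiv:2410.01642 — 3 statements merged into one kernel-verified Lean document; each statement's English description precedes it below -/
import Mathlib

section
/- (Estimate for nonsymmetry at a contact point.) Let v : ℝ^N → ℝ be a bounded Borel function, Γ its concave envelope on Ω_{Λε+τε²}, and K_v its contact set. If x₀ ∈ K_v, then for every ξ in the superdifferential ∇Γ(x₀), liminf_{x→x₀} [ sup_{|z|<Λε} δ⁺_{Ω,τε²} v(x,z) / ε² ] ≤ τ·|ξ|. -/
/-! Let `A = Γ x₀`. The envelope is nonnegative on `Ω_{Λε+τε²}`, so the superdifferential
inequality at `x₀ - w` gives `|ξ| (Λε + τε²) ≤ A`; this lets the affine majorant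
`A + ⟪ξ, y - x₀⟫` of `v` on `Ω_{Λε+τε²}` extend, with slack `|ξ| |x - x₀|`, to every point
that a second difference centred at `x` reaches, since `v ≤ 0` off `Ω`. In
`v (x + z) + v (x - z + h)` the linear parts cancel up to `⟪ξ, h⟫ ≤ τε² |ξ|`, whence
`sup_z δ⁺ v(x, z) / ε² ≤ τ |ξ| + (2 (A - v x) + 4 |ξ| |x - x₀|) / ε²`. At a contact point with
`A > 0` there are points `x → x₀` with `v x → A`, and the liminf is at most `τ |ξ|`. -/

open MeasureTheory Metric Filter Set Function
open scoped Topology Classical RealInnerProductSpace symmDiff ENNReal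

noncomputable section

def extDom {N : ℕ} (Ω : Set (EuclideanSpace ℝ (Fin N))) (lam t ε : ℝ) :
    Set (EuclideanSpace ℝ (Fin N)) :=
  {x | Metric.infDist x Ω < lam * ε + t * ε ^ 2}

def envelope {N : ℕ} (Ω : Set (EuclideanSpace ℝ (Fin N))) (lam t ε : ℝ)
    (v : EuclideanSpace ℝ (Fin N) → ℝ) (x : EuclideanSpace ℝ (Fin N)) : ℝ :=
  if x ∈ extDom Ω lam t ε then
    sInf {w : ℝ | ∃ (a : ℝ) (ξ : EuclideanSpace ℝ (Fin N)),
      (∀ y ∈ extDom Ω lam t ε, max (v y) (sSup (v '' Ωᶜ)) ≤ a + ⟪ξ, y⟫) ∧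
      w = a + ⟪ξ, x⟫}
  else sSup (v '' Ωᶜ)

def superdiff {N : ℕ} (Ω : Set (EuclideanSpace ℝ (Fin N))) (lam t ε : ℝ)
    (Γ : EuclideanSpace ℝ (Fin N) → ℝ) (x : EuclideanSpace ℝ (Fin N)) :
    Set (EuclideanSpace ℝ (Fin N)) :=
  {ξ | ∀ z ∈ extDom Ω lam t ε, Γ z ≤ Γ x + ⟪ξ, z - x⟫}

def contactSet {N : ℕ} (Ω : Set (EuclideanSpace ℝ (Fin N))) (lam t ε : ℝ)
    (v : EuclideanSpace ℝ (Fin N) → ℝ) : Set (EuclideanSpace ℝ (Fin N)) :=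
  {x ∈ closure Ω |
    Filter.limsup (fun y => max (v y) (sSup (v '' Ωᶜ))) (𝓝 x) = envelope Ω lam t ε v x}

section SecondDifference

variable {E : Type*} [SeminormedAddCommGroup E]

/-- The maximal second difference `δ⁺_{Ω,r} v(x,z)`. -/
def maxSecondDiff (r : ℝ) (v : E → ℝ) (x z : E) : ℝ :=
  v (x + z) + sSup {s : ℝ | ∃ h : E, ‖h‖ < r ∧ s = v (x - z + h)} - 2 * v x

/-- `sup_{|z| < Λε} δ⁺_{Ω,τε²} v(x,z) / ε²`. -/
def supMaxSecondDiff (Λ τ ε : ℝ) (v : E → ℝ) (x : E) : ℝ :=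
  sSup {w : ℝ | ∃ z : E, ‖z‖ < Λ * ε ∧ w = maxSecondDiff (τ * ε ^ 2) v x z / ε ^ 2}

variable {v : E → ℝ} {x : E}

theorem maxSecondDiff_le {r B : ℝ} {z : E} (hr : 0 < r)
    (hB : ∀ h : E, ‖h‖ < r → v (x + z) + v (x - z + h) - 2 * v x ≤ B) :
    maxSecondDiff r v x z ≤ B := by
  have hsup : sSup {s : ℝ | ∃ h : E, ‖h‖ < r ∧ s = v (x - z + h)} ≤ B - v (x + z) + 2 * v x :=
    csSup_le ⟨_, 0, by simpa using hr, rfl⟩ fun _ ⟨h, hh, hs⟩ => by linarith [hB h hh]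
  unfold maxSecondDiff
  linarith

theorem supMaxSecondDiff_le {Λ τ ε B : ℝ} (hΛε : 0 < Λ * ε) (hτε : 0 < τ * ε ^ 2)
    (hB : ∀ z h : E, ‖z‖ < Λ * ε → ‖h‖ < τ * ε ^ 2 → v (x + z) + v (x - z + h) - 2 * v x ≤ B) :
    supMaxSecondDiff Λ τ ε v x ≤ B / ε ^ 2 :=
  csSup_le ⟨_, 0, by simpa using hΛε, rfl⟩ fun _ ⟨z, hz, hw⟩ => hw ▸
    div_le_div_of_nonneg_right (maxSecondDiff_le hτε fun h hh => hB z h hz hh) (sq_nonneg ε)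

theorem supMaxSecondDiff_nonneg {Λ τ ε : ℝ} (hv : BddAbove (range v)) (hΛε : 0 < Λ * ε)
    (hτε : 0 < τ * ε ^ 2) : 0 ≤ supMaxSecondDiff Λ τ ε v x := by
  obtain ⟨M, hM⟩ := hv
  have hM' : ∀ y, v y ≤ M := fun y => hM ⟨y, rfl⟩
  have hbdd : BddAbove
      {w : ℝ | ∃ z : E, ‖z‖ < Λ * ε ∧ w = maxSecondDiff (τ * ε ^ 2) v x z / ε ^ 2} :=
    ⟨(2 * M - 2 * v x) / ε ^ 2, fun _ ⟨z, _, hw⟩ => hw ▸ div_le_div_of_nonneg_right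
      (maxSecondDiff_le hτε fun h _ => by linarith [hM' (x + z), hM' (x - z + h)]) (sq_nonneg ε)⟩
  have hzero : 0 ≤ maxSecondDiff (τ * ε ^ 2) v x 0 := by
    have : v x ≤ sSup {s : ℝ | ∃ h : E, ‖h‖ < τ * ε ^ 2 ∧ s = v (x - 0 + h)} :=
      le_csSup ⟨M, fun _ ⟨h, _, hs⟩ => hs ▸ hM' _⟩ ⟨0, by simpa using hτε, by simp⟩
    unfold maxSecondDiff
    rw [add_zero]
    linarith
  exact (div_nonneg hzero (sq_nonneg ε)).trans (le_csSup hbdd ⟨0, by simpa using hΛε, rfl⟩)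

end SecondDifference

section Affine

variable {E : Type*} [NormedAddCommGroup E] [InnerProductSpace ℝ E]

theorem norm_mul_le_of_forall_inner_le {ξ : E} {R A : ℝ} (hR : 0 < R)
    (h : ∀ w : E, ‖w‖ < R → ⟪ξ, w⟫ ≤ A) : ‖ξ‖ * R ≤ A := by
  have hclosed : ∀ w ∈ closedBall (0 : E) R, ⟪ξ, w⟫ ≤ A := by
    rw [← closure_ball (0 : E) hR.ne']
    exact closure_minimal (fun w hw => h w (mem_ball_zero_iff.mp hw))
      (isClosed_le (by fun_prop) continuous_const : IsClosed {w : E | ⟪ξ, w⟫ ≤ A})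
  rcases eq_or_ne ξ 0 with rfl | hξ
  · simpa using hclosed 0 (mem_closedBall_self hR.le)
  · have hξpos : 0 < ‖ξ‖ := norm_pos_iff.mpr hξ
    have hw : (R / ‖ξ‖) • ξ ∈ closedBall (0 : E) R := by
      rw [mem_closedBall_zero_iff, norm_smul, Real.norm_of_nonneg (by positivity),
        div_mul_cancel₀ _ hξpos.ne']
    have := hclosed _ hw
    rw [real_inner_smul_right, real_inner_self_eq_norm_sq] at this
    calc ‖ξ‖ * R = R / ‖ξ‖ * ‖ξ‖ ^ 2 := by field_simp
      _ ≤ A := this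

theorem le_affine_add_of_nonpos_off {f : E → ℝ} {D : Set E} {A R δ : ℝ} {ξ x₀ y : E}
    (hoff : ∀ y ∉ D, f y ≤ 0) (hon : ∀ y ∈ D, f y ≤ A + ⟪ξ, y - x₀⟫)
    (hA : ‖ξ‖ * R ≤ A) (hδ : 0 ≤ δ) (hy : ‖y - x₀‖ ≤ R + δ) :
    f y ≤ A + ⟪ξ, y - x₀⟫ + ‖ξ‖ * δ := by
  by_cases hyD : y ∈ D
  · nlinarith [hon y hyD, norm_nonneg ξ]
  · have hinner : -(‖ξ‖ * ‖y - x₀‖) ≤ ⟪ξ, y - x₀⟫ :=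
      neg_le_of_abs_le (abs_real_inner_le_norm ξ (y - x₀))
    nlinarith [hoff y hyD, mul_le_mul_of_nonneg_left hy (norm_nonneg ξ)]

/-- The affine parts at `x + z` and `x - z + h` cancel up to the shift `h`. -/
theorem add_le_of_le_affine {f : E → ℝ} {s : Set E} {A c : ℝ} {ξ x₀ : E}
    (hf : ∀ y ∈ s, f y ≤ A + ⟪ξ, y - x₀⟫ + c) {x z h : E} (h₁ : x + z ∈ s)
    (h₂ : x - z + h ∈ s) :
    f (x + z) + f (x - z + h) ≤ 2 * (A + ⟪ξ, x - x₀⟫ + c) + ⟪ξ, h⟫ := by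
  have hsum : ⟪ξ, x + z - x₀⟫ + ⟪ξ, x - z + h - x₀⟫ = 2 * ⟪ξ, x - x₀⟫ + ⟪ξ, h⟫ := by
    simp only [inner_add_right, inner_sub_right]
    ring
  linarith [hf _ h₁, hf _ h₂]

theorem supMaxSecondDiff_le_of_affine_majorant {f : E → ℝ} {Λ τ ε A : ℝ} {ξ x₀ : E}
    (hΛε : 0 < Λ * ε) (hτε : 0 < τ * ε ^ 2)
    (hf : ∀ δ, 0 ≤ δ → ∀ y, ‖y - x₀‖ ≤ Λ * ε + τ * ε ^ 2 + δ → f y ≤ A + ⟪ξ, y - x₀⟫ + ‖ξ‖ * δ)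
    (x : E) :
    supMaxSecondDiff Λ τ ε f x ≤ τ * ‖ξ‖ + (2 * (A - f x) + 4 * ‖ξ‖ * ‖x - x₀‖) / ε ^ 2 := by
  set d := ‖x - x₀‖
  have hmaj : ∀ y ∈ {y : E | ‖y - x₀‖ ≤ Λ * ε + τ * ε ^ 2 + d},
      f y ≤ A + ⟪ξ, y - x₀⟫ + ‖ξ‖ * d := fun y hy => hf d (norm_nonneg _) y hy
  calc supMaxSecondDiff Λ τ ε f x
      ≤ (2 * (A - f x) + 4 * ‖ξ‖ * d + ‖ξ‖ * (τ * ε ^ 2)) / ε ^ 2 := by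
        refine supMaxSecondDiff_le hΛε hτε fun z h hz hh => ?_
        have h₁ : ‖x + z - x₀‖ ≤ Λ * ε + τ * ε ^ 2 + d := by
          calc ‖x + z - x₀‖ = ‖(x - x₀) + z‖ := by rw [sub_add_eq_add_sub]
            _ ≤ d + ‖z‖ := norm_add_le _ _
            _ ≤ _ := by linarith
        have h₂ : ‖x - z + h - x₀‖ ≤ Λ * ε + τ * ε ^ 2 + d := by
          calc ‖x - z + h - x₀‖ = ‖(x - x₀) - z + h‖ := by congr 1; abel
            _ ≤ d + ‖z‖ + ‖h‖ := (norm_add_le _ _).trans (by gcongr; exact norm_sub_le _ _)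
            _ ≤ _ := by linarith
        have hsum := add_le_of_le_affine hmaj h₁ h₂
        have hx := real_inner_le_norm ξ (x - x₀)
        have hh' : ⟪ξ, h⟫ ≤ ‖ξ‖ * (τ * ε ^ 2) :=
          (real_inner_le_norm ξ h).trans (mul_le_mul_of_nonneg_left hh.le (norm_nonneg ξ))
        linarith
    _ = τ * ‖ξ‖ + (2 * (A - f x) + 4 * ‖ξ‖ * d) / ε ^ 2 := by
        have hε : ε ≠ 0 := by rintro rfl; simp at hΛε
        field_simp
        ring

end Affine

section Envelope

variable {N : ℕ} {Ω : Set (EuclideanSpace ℝ (Fin N))} {lam t ε : ℝ}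
  {v : EuclideanSpace ℝ (Fin N) → ℝ} {x₀ ξ : EuclideanSpace ℝ (Fin N)}

theorem mem_extDom_of_norm_sub_lt {y : EuclideanSpace ℝ (Fin N)} (hx₀ : x₀ ∈ closure Ω)
    (hy : ‖y - x₀‖ < lam * ε + t * ε ^ 2) : y ∈ extDom Ω lam t ε :=
  calc infDist y Ω ≤ infDist x₀ Ω + dist y x₀ := infDist_le_infDist_add_dist
    _ = ‖y - x₀‖ := by rw [infDist_zero_of_mem_closure hx₀, zero_add, dist_eq_norm]
    _ < _ := hy

theorem max_le_envelope (hv : BddAbove (range v)) {y : EuclideanSpace ℝ (Fin N)}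
    (hy : y ∈ extDom Ω lam t ε) :
    max (v y) (sSup (v '' Ωᶜ)) ≤ envelope Ω lam t ε v y := by
  obtain ⟨M, hM⟩ := hv
  rw [envelope, if_pos hy]
  refine le_csInf ⟨_, max M (sSup (v '' Ωᶜ)), 0, fun y' _ => ?_, rfl⟩ fun _ ⟨_, _, hmaj, hw⟩ =>
    hw ▸ hmaj y hy
  rw [inner_zero_left, add_zero]
  exact max_le_max_right _ (hM ⟨y', rfl⟩)

variable (hv : BddAbove (range v)) (hnorm : sSup (v '' Ωᶜ) = 0)
  (hR : 0 < lam * ε + t * ε ^ 2) (hx₀ : x₀ ∈ closure Ω)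
  (hξ : ξ ∈ superdiff Ω lam t ε (envelope Ω lam t ε v) x₀)
include hv hnorm hR hx₀ hξ

/-- The envelope is nonnegative on the extended domain, so `x₀ - w` gives `⟪ξ, w⟫ ≤ Γ x₀`. -/
theorem norm_mul_le_envelope : ‖ξ‖ * (lam * ε + t * ε ^ 2) ≤ envelope Ω lam t ε v x₀ := by
  refine norm_mul_le_of_forall_inner_le hR fun w hw => ?_
  have hmem : x₀ - w ∈ extDom Ω lam t ε := mem_extDom_of_norm_sub_lt hx₀ (by simpa using hw)
  have hsuper := hξ _ hmem
  have hnonneg := (le_max_right _ _).trans (max_le_envelope hv hmem)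
  rw [sub_sub_cancel_left, inner_neg_right] at hsuper
  linarith

theorem le_envelope_add_inner {δ : ℝ} (hδ : 0 ≤ δ) {y : EuclideanSpace ℝ (Fin N)}
    (hy : ‖y - x₀‖ ≤ lam * ε + t * ε ^ 2 + δ) :
    v y ≤ envelope Ω lam t ε v x₀ + ⟪ξ, y - x₀⟫ + ‖ξ‖ * δ := by
  refine le_affine_add_of_nonpos_off (D := extDom Ω lam t ε) (fun y hy => ?_)
    (fun y hy => (le_max_left _ _).trans ((max_le_envelope hv hy).trans (hξ y hy)))
    (norm_mul_le_envelope hv hnorm hR hx₀ hξ) hδ hy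
  have hyΩ : y ∈ Ωᶜ := fun hyΩ => hy (mem_extDom_of_norm_sub_lt (subset_closure hyΩ) (by simpa))
  exact hnorm ▸ le_csSup (hv.mono (image_subset_range _ _)) (mem_image_of_mem v hyΩ)

theorem envelope_pos (hpos : 0 < sSup (v '' Ω)) : 0 < envelope Ω lam t ε v x₀ := by
  by_contra! hA
  have hξ0 : ‖ξ‖ = 0 := by nlinarith [norm_mul_le_envelope hv hnorm hR hx₀ hξ, norm_nonneg ξ]
  refine hpos.not_ge (Real.sSup_nonpos fun _ ⟨y, _, hy⟩ => hy ▸ ?_)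
  have := le_envelope_add_inner hv hnorm hR hx₀ hξ (norm_nonneg (y - x₀))
    (le_add_of_nonneg_left hR.le)
  have := real_inner_le_norm ξ (y - x₀)
  rw [hξ0, zero_mul] at *
  linarith

end Envelope

theorem frequently_lt_of_mem_contactSet {N : ℕ} {Ω : Set (EuclideanSpace ℝ (Fin N))}
    {lam t ε : ℝ} {v : EuclideanSpace ℝ (Fin N) → ℝ} {x₀ : EuclideanSpace ℝ (Fin N)}
    (hnorm : sSup (v '' Ωᶜ) = 0) (hx₀ : x₀ ∈ contactSet Ω lam t ε v) {b : ℝ} (hb0 : 0 ≤ b)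
    (hb : b < envelope Ω lam t ε v x₀) : ∃ᶠ y in 𝓝 x₀, b < v y := by
  have hlimsup := hx₀.2
  rw [hnorm] at hlimsup
  have hfreq := frequently_lt_of_lt_limsup (isCoboundedUnder_le_of_le _ fun y => le_max_right _ 0)
    (hlimsup ▸ hb)
  exact hfreq.mono fun y hy => (lt_max_iff.mp hy).resolve_right hb0.not_gt

theorem contact_point_nonsymmetry_estimate_general
    (N : ℕ) (Λ τ ε : ℝ) (hΛ : 1 ≤ Λ) (hτ : 1 ≤ τ) (hε : 0 < ε)
    (Ω : Set (EuclideanSpace ℝ (Fin N)))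
    (v : EuclideanSpace ℝ (Fin N) → ℝ) (hb : ∃ M, ∀ x, |v x| ≤ M)
    (hnorm : sSup (v '' Ωᶜ) = 0) (hpos : 0 < sSup (v '' Ω))
    (x₀ : EuclideanSpace ℝ (Fin N)) (hx₀ : x₀ ∈ contactSet Ω Λ τ ε v)
    (ξ : EuclideanSpace ℝ (Fin N))
    (hξ : ξ ∈ superdiff Ω Λ τ ε (envelope Ω Λ τ ε v) x₀) :
    Filter.liminf (fun x =>
        sSup {w : ℝ | ∃ z : EuclideanSpace ℝ (Fin N), ‖z‖ < Λ * ε ∧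
          w = (v (x + z) +
              sSup {s : ℝ | ∃ h : EuclideanSpace ℝ (Fin N), ‖h‖ < τ * ε ^ 2 ∧
                s = v (x - z + h)} - 2 * v x) / ε ^ 2})
      (𝓝 x₀) ≤ τ * ‖ξ‖ := by
  obtain ⟨M, hM⟩ := hb
  have hvb : BddAbove (range v) := ⟨M, fun _ ⟨x, hx⟩ => hx ▸ (abs_le.mp (hM x)).2⟩
  have hΛε : 0 < Λ * ε := mul_pos (by linarith) hε
  have hτε : 0 < τ * ε ^ 2 := mul_pos (by linarith) (by positivity)
  have hR := add_pos hΛε hτε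
  have hA := envelope_pos hvb hnorm hR hx₀.1 hξ hpos
  have hest := supMaxSecondDiff_le_of_affine_majorant hΛε hτε
    fun δ hδ y hy => le_envelope_add_inner hvb hnorm hR hx₀.1 hξ hδ hy
  set A := envelope Ω Λ τ ε v x₀
  change liminf (supMaxSecondDiff Λ τ ε v) (𝓝 x₀) ≤ τ * ‖ξ‖
  refine le_of_forall_pos_le_add fun η hη => liminf_le_of_frequently_le ?_
    (isBoundedUnder_of ⟨0, fun x => supMaxSecondDiff_nonneg hvb hΛε hτε⟩)
  have hηε : 0 < η * ε ^ 2 := by positivity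
  have hlarge := frequently_lt_of_mem_contactSet hnorm hx₀ (le_max_left 0 (A - η * ε ^ 2 / 4))
    (max_lt hA (by linarith))
  have hclose : ∀ᶠ x in 𝓝 x₀, 4 * ‖ξ‖ * ‖x - x₀‖ < η * ε ^ 2 / 2 :=
    Tendsto.eventually_lt_const (by positivity) (Continuous.tendsto' (by fun_prop) x₀ _ (by simp))
  refine (hlarge.and_eventually hclose).mono fun x ⟨hvx, hx⟩ => ?_
  have herr : (2 * (A - v x) + 4 * ‖ξ‖ * ‖x - x₀‖) / ε ^ 2 ≤ η := by
    rw [div_le_iff₀ (by positivity)]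
    linarith [le_max_right 0 (A - η * ε ^ 2 / 4)]
  linarith [hest x]

/-- Lemma 4.2 (Estimate for nonsymmetry at a contact point). -/
theorem contact_point_nonsymmetry_estimate
    (N : ℕ) (Λ τ ε : ℝ) (hΛ : 1 ≤ Λ) (hτ : 1 ≤ τ) (hε : 0 < ε)
    (Ω : Set (EuclideanSpace ℝ (Fin N))) (hΩo : IsOpen Ω) (hΩb : Bornology.IsBounded Ω)
    (v : EuclideanSpace ℝ (Fin N) → ℝ) (hv : Measurable v) (hb : ∃ M, ∀ x, |v x| ≤ M)
    (hnorm : sSup (v '' Ωᶜ) = 0) (hpos : 0 < sSup (v '' Ω))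
    (x₀ : EuclideanSpace ℝ (Fin N)) (hx₀ : x₀ ∈ contactSet Ω Λ τ ε v)
    (ξ : EuclideanSpace ℝ (Fin N))
    (hξ : ξ ∈ superdiff Ω Λ τ ε (envelope Ω Λ τ ε v) x₀) :
    Filter.liminf (fun x =>
        sSup {w : ℝ | ∃ z : EuclideanSpace ℝ (Fin N), ‖z‖ < Λ * ε ∧
          w = (v (x + z) +
              sSup {s : ℝ | ∃ h : EuclideanSpace ℝ (Fin N), ‖h‖ < τ * ε ^ 2 ∧
                s = v (x - z + h)} - 2 * v x) / ε ^ 2})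
      (𝓝 x₀) ≤ τ * ‖ξ‖ :=
  contact_point_nonsymmetry_estimate_general N Λ τ ε hΛ hτ hε Ω v hb hnorm hpos x₀ hx₀ ξ hξ
end
end

section
/- Let v : ℝ^N → ℝ be a bounded Borel function with v ≤ 0 on ℝ^N∖Ω, Γ its concave envelope on Ω_{Λε+τε²}, and K_v its contact set. Then B_M ⊂ ∇Γ(K_v), i.e. for every vector η with |η| < M there is a point x ∈ K_v with η in the superdifferential ∇Γ(x), where M = sup_Ω v⁺ / (diam Ω + Λε + τε²). -/
open MeasureTheory Metric Filter Set Function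
open scoped Topology Classical RealInnerProductSpace symmDiff ENNReal

noncomputable section

/-!
Take the smallest translate `c + ⟪η, ·⟫` of the linear function `⟪η, ·⟫` lying above `v̂` on
`Ω_{Λε+τε²}`. By compactness it touches the upper semicontinuous envelope
`limsup v̂` at some point `x₀` of the closure. Any affine majorant of `v̂` also majorises
`limsup v̂` on the open set `Ω_{Λε+τε²}`, so `Γ(x₀) = c + ⟪η, x₀⟫ = limsup v̂ (x₀)` and
`Γ ≤ c + ⟪η, ·⟫`: thus `x₀` is a contact point with `η ∈ ∇Γ(x₀)`. Finally `x₀ ∈ closure Ω`: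
otherwise `limsup v̂ (x₀) ≤ 0`, while the bound `|η| < M` and a point where `v` is nearly
`sup_Ω v⁺` make the touching value positive.
-/

section Limsup

variable {X : Type*} [TopologicalSpace X]

theorem limsup_nhds_le_of_eventually_le {f p : X → ℝ} {x : X}
    (hf : IsCoboundedUnder (· ≤ ·) (𝓝 x) f) (hp : ContinuousAt p x) (h : f ≤ᶠ[𝓝 x] p) :
    limsup f (𝓝 x) ≤ p x :=
  (limsup_le_limsup h hf hp.tendsto.isBoundedUnder_le).trans_eq hp.tendsto.limsup_eq

theorem mem_closure_of_limsup_pos {s : Set X} {f : X → ℝ} {x : X}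
    (hf : IsCoboundedUnder (· ≤ ·) (𝓝 x) f) (hs : ∀ y ∉ s, f y ≤ 0)
    (h : 0 < limsup f (𝓝 x)) : x ∈ closure s := by
  by_contra hx
  have hev : f ≤ᶠ[𝓝 x] fun _ => 0 := by
    filter_upwards [isClosed_closure.isOpen_compl.mem_nhds hx] with y hy
    exact hs y fun hys => hy (subset_closure hys)
  exact h.not_ge (limsup_nhds_le_of_eventually_le hf continuousAt_const hev)

theorem exists_translate_le_and_touches_limsup {D : Set X} (hD : IsCompact (closure D))
    (hne : D.Nonempty) {f ℓ : X → ℝ} (hf : BddAbove (range f)) (hℓ : Continuous ℓ) :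
    ∃ c, (∀ y ∈ D, f y ≤ c + ℓ y) ∧ ∃ x ∈ closure D, c + ℓ x ≤ limsup f (𝓝 x) := by
  set g := fun y => f y - ℓ y
  obtain ⟨B, hB⟩ := hf
  obtain ⟨m, hm⟩ := hD.bddBelow_image hℓ.continuousOn
  have hgD : BddAbove (g '' D) := ⟨B - m, by
    rintro _ ⟨y, hy, rfl⟩
    linarith [hB ⟨y, rfl⟩, hm (mem_image_of_mem ℓ (subset_closure hy))]⟩
  set c := sSup (g '' D)
  refine ⟨c, fun y hy => by linarith [le_csSup hgD (mem_image_of_mem g hy)], ?_⟩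
  -- a cluster point of `D` along which `g` tends to its supremum
  have hc : (𝓝[g '' D] c).NeBot :=
    mem_closure_iff_nhdsWithin_neBot.1 (csSup_mem_closure (hne.image g) hgD)
  set F := comap g (𝓝[g '' D] c) ⊓ 𝓟 D
  have : F.NeBot := comap_inf_principal_neBot_of_image_mem hc self_mem_nhdsWithin
  obtain ⟨x, hx, hxF⟩ := hD.exists_clusterPt (f := F)
    (inf_le_right.trans (principal_mono.2 subset_closure))
  refine ⟨x, hx, le_of_forall_sub_le fun δ hδ => ?_⟩
  have hgc : ∀ᶠ y in F, c - δ / 2 < g y :=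
    mem_inf_of_left (preimage_mem_comap
      (mem_nhdsWithin_of_mem_nhds (Ioi_mem_nhds (by linarith))))
  have hℓx : ∀ᶠ y in 𝓝 x, ℓ x - δ / 2 < ℓ y :=
    hℓ.continuousAt.eventually (Ioi_mem_nhds (by linarith))
  refine le_limsup_of_frequently_le ?_ (BddAbove.isBoundedUnder_of_range ⟨B, hB⟩)
  refine ((hxF.frequently' hgc).and_eventually hℓx).mono fun y ⟨hgy, hℓy⟩ => ?_
  linarith [show g y = f y - ℓ y from rfl]

end Limsup

theorem exists_lt_of_lt_sSup_image_max_zero {α : Type*} {s : Set α} {v : α → ℝ} {b : ℝ}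
    (hb : 0 ≤ b) (h : b < sSup ((fun x => max (v x) 0) '' s)) : ∃ y ∈ s, b < v y := by
  by_contra! hle
  refine h.not_ge (Real.sSup_le ?_ hb)
  rintro _ ⟨y, hy, rfl⟩
  exact max_le (hle y hy) hb

theorem inner_sub_inner_le_norm_mul_dist {E : Type*} [NormedAddCommGroup E]
    [InnerProductSpace ℝ E] (η x y : E) : ⟪η, y⟫ - ⟪η, x⟫ ≤ ‖η‖ * dist y x := by
  rw [← inner_sub_right, dist_eq_norm]
  exact real_inner_le_norm _ _

section VHat

variable {α : Type*} {Ω : Set α} {v : α → ℝ}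

def vHat (Ω : Set α) (v : α → ℝ) (y : α) : ℝ :=
  max (v y) (sSup (v '' Ωᶜ))

theorem le_vHat (y : α) : v y ≤ vHat Ω v y :=
  le_max_left _ _

theorem vHat_nonpos_of_notMem (hneg : ∀ x ∉ Ω, v x ≤ 0) {y : α} (hy : y ∉ Ω) :
    vHat Ω v y ≤ 0 :=
  max_le (hneg y hy) (Real.sSup_nonpos (by rintro _ ⟨x, hx, rfl⟩; exact hneg x hx))

theorem bddAbove_range_vHat (hv : BddAbove (range v)) : BddAbove (range (vHat Ω v)) := by
  obtain ⟨B, hB⟩ := hv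
  exact ⟨max B (sSup (v '' Ωᶜ)), by rintro _ ⟨y, rfl⟩; exact max_le_max_right _ (hB ⟨y, rfl⟩)⟩

theorem bddBelow_range_vHat (hv : BddBelow (range v)) : BddBelow (range (vHat Ω v)) := by
  obtain ⟨B, hB⟩ := hv
  exact ⟨B, by rintro _ ⟨y, rfl⟩; exact (hB ⟨y, rfl⟩).trans (le_vHat y)⟩

end VHat

section Envelope

variable {N : ℕ} {Ω : Set (EuclideanSpace ℝ (Fin N))} {lam t ε : ℝ}

theorem isOpen_extDom : IsOpen (extDom Ω lam t ε) :=
  isOpen_lt (continuous_infDist_pt Ω) continuous_const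

theorem closure_subset_extDom (h : 0 < lam * ε + t * ε ^ 2) : closure Ω ⊆ extDom Ω lam t ε :=
  fun x hx => show infDist x Ω < _ by rwa [infDist_zero_of_mem_closure hx]

theorem dist_le_diam_add_of_mem_closure_extDom (hΩ : Bornology.IsBounded Ω)
    {x y : EuclideanSpace ℝ (Fin N)} (hy : y ∈ Ω) (hx : x ∈ closure (extDom Ω lam t ε)) :
    dist y x ≤ diam Ω + (lam * ε + t * ε ^ 2) := by
  have hxΩ : infDist x Ω ≤ lam * ε + t * ε ^ 2 :=
    closure_lt_subset_le (continuous_infDist_pt Ω) continuous_const hx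
  rw [dist_comm]
  linarith [dist_le_infDist_add_diam (x := x) hΩ hy]

theorem isCompact_closure_extDom (hΩ : Bornology.IsBounded Ω) (hne : Ω.Nonempty) :
    IsCompact (closure (extDom Ω lam t ε)) := by
  obtain ⟨y, hy⟩ := hne
  refine ((isBounded_iff_subset_closedBall y).2
    ⟨diam Ω + (lam * ε + t * ε ^ 2), fun x hx => ?_⟩).isCompact_closure
  rw [mem_closedBall, dist_comm]
  exact dist_le_diam_add_of_mem_closure_extDom hΩ hy (subset_closure hx)

variable {v : EuclideanSpace ℝ (Fin N) → ℝ} {x ξ : EuclideanSpace ℝ (Fin N)} {a : ℝ}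

theorem envelope_le_of_forall_le (hx : x ∈ extDom Ω lam t ε)
    (h : ∀ y ∈ extDom Ω lam t ε, vHat Ω v y ≤ a + ⟪ξ, y⟫) :
    envelope Ω lam t ε v x ≤ a + ⟪ξ, x⟫ := by
  rw [envelope, if_pos hx]
  refine csInf_le ⟨vHat Ω v x, ?_⟩ ⟨a, ξ, h, rfl⟩
  rintro _ ⟨b, ζ, hb, rfl⟩
  exact hb x hx

theorem limsup_vHat_le_envelope (hv_above : BddAbove (range v)) (hv_below : BddBelow (range v))
    (hx : x ∈ extDom Ω lam t ε) : limsup (vHat Ω v) (𝓝 x) ≤ envelope Ω lam t ε v x := by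
  obtain ⟨B, hB⟩ := bddAbove_range_vHat (Ω := Ω) hv_above
  rw [envelope, if_pos hx]
  refine le_csInf ⟨B + ⟪0, x⟫, B, 0, fun y _ => by
    rw [inner_zero_left, add_zero]; exact hB ⟨y, rfl⟩, rfl⟩ ?_
  rintro _ ⟨b, ζ, hb, rfl⟩
  refine limsup_nhds_le_of_eventually_le (p := fun y => b + ⟪ζ, y⟫)
    (bddBelow_range_vHat hv_below).isBoundedUnder_of_range.isCoboundedUnder_le (by fun_prop) ?_
  filter_upwards [isOpen_extDom.mem_nhds hx] with y hy using hb y hy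

theorem mem_contactSet_and_mem_superdiff (hv_above : BddAbove (range v))
    (hv_below : BddBelow (range v)) (hr : 0 < lam * ε + t * ε ^ 2) (hx : x ∈ closure Ω)
    (hdom : ∀ y ∈ extDom Ω lam t ε, vHat Ω v y ≤ a + ⟪ξ, y⟫)
    (htouch : a + ⟪ξ, x⟫ ≤ limsup (vHat Ω v) (𝓝 x)) :
    x ∈ contactSet Ω lam t ε v ∧ ξ ∈ superdiff Ω lam t ε (envelope Ω lam t ε v) x := by
  have hxD := closure_subset_extDom hr hx
  have hle := envelope_le_of_forall_le hxD hdom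
  have hge := limsup_vHat_le_envelope hv_above hv_below hxD
  refine ⟨⟨hx, le_antisymm hge (hle.trans htouch)⟩, fun z hz => ?_⟩
  rw [le_antisymm hle (htouch.trans hge), inner_sub_right]
  linarith [envelope_le_of_forall_le hz hdom]

end Envelope

theorem superdifferential_covers_ball_general
    (N : ℕ) (Λ τ ε : ℝ) (hΛ : 1 ≤ Λ) (hτ : 1 ≤ τ) (hε : 0 < ε)
    (Ω : Set (EuclideanSpace ℝ (Fin N))) (hΩb : Bornology.IsBounded Ω)
    (v : EuclideanSpace ℝ (Fin N) → ℝ) (hb : ∃ M, ∀ x, |v x| ≤ M)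
    (hneg : ∀ x ∉ Ω, v x ≤ 0) :
    ∀ η : EuclideanSpace ℝ (Fin N),
      ‖η‖ < sSup ((fun x => max (v x) 0) '' Ω) / (Metric.diam Ω + Λ * ε + τ * ε ^ 2) →
      ∃ x ∈ contactSet Ω Λ τ ε v, η ∈ superdiff Ω Λ τ ε (envelope Ω Λ τ ε v) x := by
  intro η hη
  rw [add_assoc] at hη
  set r := Λ * ε + τ * ε ^ 2
  have hr : 0 < r := add_pos (mul_pos (by linarith) hε) (mul_pos (by linarith) (pow_pos hε 2))
  obtain ⟨M, hM⟩ := hb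
  have hv : Bornology.IsBounded (range v) :=
    isBounded_iff_forall_norm_le.2 ⟨M, by rintro _ ⟨x, rfl⟩; exact hM x⟩
  obtain ⟨hv_below, hv_above⟩ := isBounded_iff_bddBelow_bddAbove.1 hv
  obtain ⟨y₀, hy₀, hvy₀⟩ := exists_lt_of_lt_sSup_image_max_zero (by positivity)
    ((lt_div_iff₀ (add_pos_of_nonneg_of_pos diam_nonneg hr)).1 hη)
  have hy₀D := closure_subset_extDom hr (subset_closure hy₀)
  obtain ⟨c, hdom, x₀, hx₀, htouch⟩ := exists_translate_le_and_touches_limsup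
    (isCompact_closure_extDom hΩb ⟨y₀, hy₀⟩) ⟨y₀, hy₀D⟩ (bddAbove_range_vHat (Ω := Ω) hv_above)
    (continuous_const.inner continuous_id : Continuous fun y => ⟪η, y⟫)
  have hpos : 0 < c + ⟪η, x₀⟫ := by
    have hdist := mul_le_mul_of_nonneg_left
      (dist_le_diam_add_of_mem_closure_extDom hΩb hy₀ hx₀) (norm_nonneg η)
    linarith [hdom y₀ hy₀D, le_vHat (Ω := Ω) (v := v) y₀, inner_sub_inner_le_norm_mul_dist η x₀ y₀]
  have hx₀Ω : x₀ ∈ closure Ω :=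
    mem_closure_of_limsup_pos
      (bddBelow_range_vHat hv_below).isBoundedUnder_of_range.isCoboundedUnder_le
      (fun _ hy => vHat_nonpos_of_notMem hneg hy) (hpos.trans_le htouch)
  exact ⟨x₀, mem_contactSet_and_mem_superdiff hv_above hv_below hr hx₀Ω hdom htouch⟩

/-- Lemma 4.5: the superdifferential of the concave envelope on the contact set
covers the ball of radius `M = sup_Ω v⁺ / (diam Ω + Λε + τε²)`. -/
theorem superdifferential_covers_ball
    (N : ℕ) (Λ τ ε : ℝ) (hΛ : 1 ≤ Λ) (hτ : 1 ≤ τ) (hε : 0 < ε)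
    (Ω : Set (EuclideanSpace ℝ (Fin N))) (hΩo : IsOpen Ω) (hΩb : Bornology.IsBounded Ω)
    (hΩne : Ω.Nonempty)
    (v : EuclideanSpace ℝ (Fin N) → ℝ) (hv : Measurable v) (hb : ∃ M, ∀ x, |v x| ≤ M)
    (hneg : ∀ x ∉ Ω, v x ≤ 0) :
    ∀ η : EuclideanSpace ℝ (Fin N),
      ‖η‖ < sSup ((fun x => max (v x) 0) '' Ω) / (Metric.diam Ω + Λ * ε + τ * ε ^ 2) →
      ∃ x ∈ contactSet Ω Λ τ ε v, η ∈ superdiff Ω Λ τ ε (envelope Ω Λ τ ε v) x :=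
  superdifferential_covers_ball_general N Λ τ ε hΛ hτ hε Ω hΩb v hb hneg
end
end

section
/- Let σ > 0. If a, b > 0 and c ∈ ℝ satisfy 2(σ+2)·b ≤ a and |c| < a + b, then (a+b+c)^{−σ} + (a+b−c)^{−σ} − 2a^{−σ} ≥ 2σ·a^{−σ−1}·( −b + (σ+1)·c²/(4a) ). -/
/-!
Write `f t = t ^ (-σ)` and `x = a + b`. Since `f''` is convex,
`s ↦ f (x + s) + f (x - s) - f'' x s²` has a monotone derivative vanishing at `0`, so the
symmetric second difference of `f` at `x` is at least `f'' x c² = σ (σ + 1) x ^ (-σ - 2) c²`.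
It remains to move the base point from `x` back to `a`: the tangent line of `f` at `a` bounds
`f x` from below, and Bernoulli's inequality together with `(σ + 2) b ≤ a / 2` gives
`x ^ (-σ - 2) ≥ a ^ (-σ - 2) / 2`.
-/

open Real Set

theorem Convex.monotoneOn_of_hasDerivAt_nonneg {D : Set ℝ} (hD : Convex ℝ D) {f f' : ℝ → ℝ}
    (hf : ∀ x ∈ D, HasDerivAt f (f' x) x) (hf' : ∀ x ∈ D, 0 ≤ f' x) : MonotoneOn f D :=
  monotoneOn_of_hasDerivWithinAt_nonneg hD
    (fun x hx => (hf x hx).continuousAt.continuousWithinAt)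
    (fun x hx => (hf x (interior_subset hx)).hasDerivWithinAt)
    fun x hx => hf' x (interior_subset hx)

theorem mul_sq_le_second_difference_of_convexOn {f f' f'' : ℝ → ℝ} {x c : ℝ} (hc : 0 ≤ c)
    (hf : ∀ t ∈ Icc (x - c) (x + c), HasDerivAt f (f' t) t)
    (hf' : ∀ t ∈ Icc (x - c) (x + c), HasDerivAt f' (f'' t) t)
    (hconv : ConvexOn ℝ (Icc (x - c) (x + c)) f'') :
    f'' x * c ^ 2 ≤ f (x + c) + f (x - c) - 2 * f x := by
  have mem_add : ∀ s ∈ Icc 0 c, x + s ∈ Icc (x - c) (x + c) := fun s hs =>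
    ⟨by linarith [hs.1], by linarith [hs.2]⟩
  have mem_sub : ∀ s ∈ Icc 0 c, x - s ∈ Icc (x - c) (x + c) := fun s hs =>
    ⟨by linarith [hs.2], by linarith [hs.1]⟩
  have hmid : ∀ s ∈ Icc 0 c, 2 * f'' x ≤ f'' (x + s) + f'' (x - s) := by
    intro s hs
    have h := hconv.2 (mem_add s hs) (mem_sub s hs) (by norm_num : (0 : ℝ) ≤ 1 / 2)
      (by norm_num : (0 : ℝ) ≤ 1 / 2) (by norm_num)
    rw [smul_eq_mul, smul_eq_mul, smul_eq_mul, smul_eq_mul,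
      show 1 / 2 * (x + s) + 1 / 2 * (x - s) = x by ring] at h
    linarith
  have hslope : MonotoneOn (fun s => f' (x + s) - f' (x - s) - 2 * f'' x * s) (Icc 0 c) := by
    refine (convex_Icc 0 c).monotoneOn_of_hasDerivAt_nonneg
      (f' := fun s => f'' (x + s) + f'' (x - s) - 2 * f'' x) (fun s hs => ?_)
      fun s hs => by linarith [hmid s hs]
    exact ((((hf' _ (mem_add s hs)).comp_const_add x s).sub
      ((hf' _ (mem_sub s hs)).comp_const_sub x s)).sub
      ((hasDerivAt_id s).const_mul (2 * f'' x))).congr_deriv (by ring)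
  have hvalue : MonotoneOn (fun s => f (x + s) + f (x - s) - f'' x * s ^ 2) (Icc 0 c) := by
    refine (convex_Icc 0 c).monotoneOn_of_hasDerivAt_nonneg
      (f' := fun s => f' (x + s) - f' (x - s) - 2 * f'' x * s) (fun s hs => ?_)
      fun s hs => by simpa using hslope ⟨le_rfl, hc⟩ hs hs.1
    exact ((((hf _ (mem_add s hs)).comp_const_add x s).add
      ((hf _ (mem_sub s hs)).comp_const_sub x s)).sub
      ((hasDerivAt_pow 2 s).const_mul (f'' x))).congr_deriv (by push_cast; ring)
  have h := hvalue ⟨le_rfl, hc⟩ ⟨hc, le_rfl⟩ hc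
  simp only [add_zero, sub_zero] at h
  linarith

theorem convexOn_rpow_of_nonpos {p : ℝ} (hp : p ≤ 0) : ConvexOn ℝ (Ioi 0) fun x : ℝ => x ^ p := by
  refine convexOn_of_hasDerivWithinAt2_nonneg (convex_Ioi 0)
    (fun x hx => (continuousAt_rpow_const x p (Or.inl (ne_of_gt hx))).continuousWithinAt)
    (f' := fun x => p * x ^ (p - 1)) (f'' := fun x => p * ((p - 1) * x ^ (p - 1 - 1)))
    (fun x hx => ?_) (fun x hx => ?_) fun x hx => ?_ <;> rw [interior_Ioi] at hx
  · exact (hasDerivAt_rpow_const (Or.inl (ne_of_gt hx))).hasDerivWithinAt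
  · exact ((hasDerivAt_rpow_const (Or.inl (ne_of_gt hx))).const_mul p).hasDerivWithinAt
  · exact mul_nonneg_of_nonpos_of_nonpos hp
      (mul_nonpos_of_nonpos_of_nonneg (by linarith) (rpow_nonneg (hx.le) _))

theorem mul_sq_le_rpow_second_difference {p x c : ℝ} (hp : p ≤ 0) (hc : |c| < x) :
    p * (p - 1) * x ^ (p - 2) * c ^ 2 ≤ (x + c) ^ p + (x - c) ^ p - 2 * x ^ p := by
  wlog hc₀ : 0 ≤ c generalizing c
  · have h := this (c := -c) (by rwa [abs_neg]) (by linarith)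
    rw [neg_sq, sub_neg_eq_add, ← sub_eq_add_neg] at h
    linarith
  have hpos : Icc (x - c) (x + c) ⊆ Ioi 0 := fun t ht => by
    rw [abs_of_nonneg hc₀] at hc
    exact (by linarith : (0 : ℝ) < x - c).trans_le ht.1
  have hderiv : ∀ t ∈ Icc (x - c) (x + c),
      HasDerivAt (fun t => p * t ^ (p - 1)) (p * (p - 1) * t ^ (p - 2)) t := fun t ht =>
    ((hasDerivAt_rpow_const (Or.inl ((hpos ht).ne'))).const_mul p).congr_deriv
      (by rw [sub_sub]; norm_num; ring)
  have hconv : ConvexOn ℝ (Icc (x - c) (x + c)) fun t => p * (p - 1) * t ^ (p - 2) :=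
    ((convexOn_rpow_of_nonpos (by linarith)).subset hpos (convex_Icc _ _)).smul
      (mul_nonneg_of_nonpos_of_nonpos hp (by linarith))
  exact mul_sq_le_second_difference_of_convexOn hc₀
    (fun t ht => hasDerivAt_rpow_const (Or.inl ((hpos ht).ne'))) hderiv hconv

theorem one_add_mul_self_le_rpow_one_add_of_nonpos {s : ℝ} (hs : -1 < s) {p : ℝ} (hp : p ≤ 0) :
    1 + p * s ≤ (1 + s) ^ p :=
  calc 1 + p * s ≤ exp (s * p) := by linarith [add_one_le_exp (s * p)]
    _ = exp s ^ p := exp_mul s p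
    _ ≤ (1 + s) ^ p := rpow_le_rpow_of_nonpos (by linarith) (by linarith [add_one_le_exp s]) hp

theorem rpow_add_mul_rpow_sub_one_mul_le_rpow_add {p a b : ℝ} (hp : p ≤ 0) (ha : 0 < a)
    (hab : 0 < a + b) :
    a ^ p + p * a ^ (p - 1) * b ≤ (a + b) ^ p := by
  have hs : -1 < b / a := by rw [lt_div_iff₀ ha]; linarith
  calc a ^ p + p * a ^ (p - 1) * b = a ^ p * (1 + p * (b / a)) := by
        rw [rpow_sub_one ha.ne']; ring
    _ ≤ a ^ p * (1 + b / a) ^ p := mul_le_mul_of_nonneg_left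
        (one_add_mul_self_le_rpow_one_add_of_nonpos hs hp) (rpow_nonneg ha.le p)
    _ = (a + b) ^ p := by
        rw [← mul_rpow ha.le (by linarith), mul_add, mul_one,
          mul_div_cancel₀ _ ha.ne']

theorem rpow_div_two_le_rpow_add {q a b : ℝ} (hq : q ≤ 0) (ha : 0 < a) (hab : 0 < a + b)
    (h : -2 * q * b ≤ a) : a ^ q / 2 ≤ (a + b) ^ q := by
  have htangent := rpow_add_mul_rpow_sub_one_mul_le_rpow_add hq ha hab
  have hmargin : 0 ≤ a ^ q * (a + 2 * q * b) / (2 * a) :=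
    div_nonneg (mul_nonneg (rpow_nonneg ha.le q) (by linarith)) (by linarith)
  have hsplit : a ^ q + q * a ^ (q - 1) * b - a ^ q / 2 = a ^ q * (a + 2 * q * b) / (2 * a) := by
    rw [rpow_sub_one ha.ne']; field_simp; ring
  linarith

theorem rpow_second_difference_estimate_general (σ a b c : ℝ) (hσ : 0 < σ) (ha : 0 < a)
    (h1 : 2 * (σ + 2) * b ≤ a) (h2 : |c| < a + b) :
    (a + b + c) ^ (-σ) + (a + b - c) ^ (-σ) - 2 * a ^ (-σ) ≥
      2 * σ * a ^ (-σ - 1) * (-b + (σ + 1) * c ^ 2 / (4 * a)) := by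
  have hab : 0 < a + b := (abs_nonneg c).trans_lt h2
  have hsecond := mul_sq_le_rpow_second_difference (p := -σ) (by linarith) h2
  have htangent := rpow_add_mul_rpow_sub_one_mul_le_rpow_add (p := -σ) (by linarith) ha hab
  have hcurv := rpow_div_two_le_rpow_add (q := -σ - 2) (by linarith) ha hab (by linarith)
  have hcurv_scaled := mul_le_mul_of_nonneg_left hcurv (by positivity : 0 ≤ σ * (σ + 1) * c ^ 2)
  have hrhs : 2 * σ * a ^ (-σ - 1) * (-b + (σ + 1) * c ^ 2 / (4 * a)) =
      -σ * a ^ (-σ - 1) * b * 2 + σ * (σ + 1) * c ^ 2 * (a ^ (-σ - 2) / 2) := by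
    rw [show -σ - 2 = -σ - 1 - 1 by ring, rpow_sub_one ha.ne' (-σ - 1)]
    field_simp
    ring
  rw [ge_iff_le, hrhs]
  linarith

theorem rpow_second_difference_estimate (σ a b c : ℝ) (hσ : 0 < σ) (ha : 0 < a) (hb : 0 < b)
    (h1 : 2 * (σ + 2) * b ≤ a) (h2 : |c| < a + b) :
    (a + b + c) ^ (-σ) + (a + b - c) ^ (-σ) - 2 * a ^ (-σ) ≥
      2 * σ * a ^ (-σ - 1) * (-b + (σ + 1) * c ^ 2 / (4 * a)) :=
  rpow_second_difference_estimate_general σ a b c hσ ha h1 h2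
end
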